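/- Let F : Ω → U be an L²-independent continuous frame with frame operator S, and let f = ∫_{Ω₁} φ(ω)F(ω) dμ(ω) for φ ∈ L²(Ω,A) and measurable Ω₁ of finite measure. Then ⟨S^{-1}f, f⟩ = ∫_{Ω₁} |φ(ω)*|² dμ(ω). -/

import Mathlib

open MeasureTheory

class HCSM (A : outParam Type*) (U : Type*) [CStarAlgebra A] [PartialOrder A] [StarOrderedRing A]
    [NormedAddCommGroup U] [NormedSpace ℂ U] extends SMul A U where
  inner : U → U → A
  add_left : ∀ f g h : U, inner (f + g) h = inner f h + inner g h
  smul_left : ∀ (a : A) (f g : U), inner (a • f) g = a * inner f g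
  smulC_left : ∀ (c : ℂ) (f g : U), inner (c • f) g = c • inner f g
  star_inner : ∀ f g : U, star (inner f g) = inner g f
  inner_nonneg : ∀ f : U, 0 ≤ inner f f
  inner_definite : ∀ f : U, inner f f = 0 → f = 0
  norm_inner : ∀ f : U, ‖f‖ = Real.sqrt ‖inner f f‖

notation "⟪" f ", " g "⟫" => HCSM.inner f g

variable {A : Type*} [CStarAlgebra A] [PartialOrder A] [StarOrderedRing A]
variable {U : Type*} [NormedAddCommGroup U] [NormedSpace ℂ U] [CompleteSpace U] [HCSM A U]
variable {Ω : Type*} [MeasurableSpace Ω]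

def MemL2 (μ : Measure Ω) (φ : Ω → A) : Prop :=
  AEStronglyMeasurable φ μ ∧ Integrable (fun ω => φ ω * star (φ ω)) μ

def WeaklyMeasurable (μ : Measure Ω) (F : Ω → U) : Prop :=
  ∀ f : U, AEStronglyMeasurable (fun ω => (⟪f, F ω⟫ : A)) μ

def IsBessel (μ : Measure Ω) (F : Ω → U) (b : ℝ) : Prop :=
  WeaklyMeasurable μ F ∧ 0 < b ∧ ∀ f : U,
    Integrable (fun ω => (⟪f, F ω⟫ : A) * ⟪F ω, f⟫) μ ∧
    (∫ ω, (⟪f, F ω⟫ : A) * ⟪F ω, f⟫ ∂μ) ≤ b • (⟪f, f⟫ : A)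

def IsContFrame (μ : Measure Ω) (F : Ω → U) (a b : ℝ) : Prop :=
  WeaklyMeasurable μ F ∧ 0 < a ∧ 0 < b ∧ ∀ f : U,
    Integrable (fun ω => (⟪f, F ω⟫ : A) * ⟪F ω, f⟫) μ ∧
    a • (⟪f, f⟫ : A) ≤ (∫ ω, (⟪f, F ω⟫ : A) * ⟪F ω, f⟫ ∂μ) ∧
    (∫ ω, (⟪f, F ω⟫ : A) * ⟪F ω, f⟫ ∂μ) ≤ b • (⟪f, f⟫ : A)

def MuComplete (μ : Measure Ω) (F : Ω → U) : Prop :=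
  ∀ f : U, (∀ᵐ ω ∂μ, (⟪f, F ω⟫ : A) = 0) → f = 0

def IsRieszBasis (μ : Measure Ω) (F : Ω → U) (a b : ℝ) : Prop :=
  WeaklyMeasurable μ F ∧ MuComplete μ F ∧ 0 < a ∧ 0 < b ∧
  ∀ φ : Ω → A, MemL2 μ φ → ∀ Ω₁ : Set Ω, MeasurableSet Ω₁ → μ Ω₁ < ⊤ →
    a * Real.sqrt ‖∫ ω in Ω₁, φ ω * star (φ ω) ∂μ‖ ≤ ‖∫ ω in Ω₁, φ ω • F ω ∂μ‖ ∧
    ‖∫ ω in Ω₁, φ ω • F ω ∂μ‖ ≤ b * Real.sqrt ‖∫ ω in Ω₁, φ ω * star (φ ω) ∂μ‖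

def L2Independent (μ : Measure Ω) (F : Ω → U) : Prop :=
  ∀ φ : Ω → A, MemL2 μ φ → (∫ ω, φ ω • F ω ∂μ) = 0 → ∀ ω, φ ω = 0

def IsDual (μ : Measure Ω) (F G : Ω → U) : Prop :=
  ∀ f : U, Integrable (fun ω => (⟪f, G ω⟫ : A) • F ω) μ ∧
    (∫ ω, (⟪f, G ω⟫ : A) • F ω ∂μ) = f

def IsRieszType (μ : Measure Ω) (F : Ω → U) : Prop :=
  (∃ G : Ω → U, (∃ b, IsBessel μ G b) ∧ IsDual μ F G) ∧
  ∀ G₁ G₂ : Ω → U, (∃ b, IsBessel μ G₁ b) → IsDual μ F G₁ →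
    (∃ b, IsBessel μ G₂ b) → IsDual μ F G₂ → G₁ =ᵐ[μ] G₂

/-!
Put `g = S⁻¹ f`. Since `S` is self-adjoint, so is `S⁻¹`, and the reconstruction formula through
the canonical dual reads `f = ∫ ⟪g, F ω⟫ • F ω`. Comparing with `f = ∫ 1_{Ω₁} φ • F`,
`L²`-independence forces `⟪g, F ω⟫ = 1_{Ω₁}(ω) φ(ω)` for every `ω`, and then
`⟪S⁻¹ f, f⟫ = ⟪S g, g⟫ = ∫ ⟪g, F ω⟫ ⟪F ω, g⟫ = ∫_{Ω₁} φ φ*`.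
-/

namespace HCSM

variable {A : Type*} [CStarAlgebra A] [PartialOrder A] [StarOrderedRing A]
variable {U : Type*} [NormedAddCommGroup U] [NormedSpace ℂ U] [HCSM A U]

lemma inner_zero_left (g : U) : (⟪(0 : U), g⟫ : A) = 0 := by
  have h := HCSM.add_left (0 : U) 0 g
  rwa [add_zero, left_eq_add] at h

lemma inner_sub_left (f g h : U) : (⟪f - g, h⟫ : A) = ⟪f, h⟫ - ⟪g, h⟫ := by
  have h' := HCSM.add_left (f - g) g h
  rw [sub_add_cancel] at h'
  exact eq_sub_of_add_eq h'.symm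

lemma ext_inner_left {f g : U} (h : ∀ x : U, (⟪f, x⟫ : A) = ⟪g, x⟫) : f = g := by
  refine sub_eq_zero.mp (HCSM.inner_definite _ ?_)
  rw [inner_sub_left, h, sub_self]

lemma zero_smul' (x : U) : (0 : A) • x = 0 :=
  ext_inner_left fun g => by rw [HCSM.smul_left, zero_mul, inner_zero_left]

lemma sub_smul' (a b : A) (x : U) : (a - b) • x = a • x - b • x :=
  ext_inner_left fun g => by
    rw [HCSM.smul_left, inner_sub_left, HCSM.smul_left, HCSM.smul_left, sub_mul]

lemma indicator_smul_apply' {Ω : Type*} (s : Set Ω) (φ : Ω → A) (F : Ω → U) (ω : Ω) :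
    s.indicator φ ω • F ω = s.indicator (fun ω => φ ω • F ω) ω := by
  by_cases hω : ω ∈ s
  · simp only [Set.indicator_of_mem hω]
  · simp only [Set.indicator_of_notMem hω, zero_smul']

lemma map_zero_of_inner_symm {T : U → U} (hT : ∀ u v : U, (⟪T u, v⟫ : A) = ⟪u, T v⟫) :
    T 0 = 0 :=
  ext_inner_left fun x => by rw [hT, inner_zero_left, inner_zero_left]

lemma inner_symm_of_rightInverse {T T' : U → U}
    (hT : ∀ u v : U, (⟪T u, v⟫ : A) = ⟪u, T v⟫) (hT' : ∀ x, T (T' x) = x) (u v : U) :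
    (⟪T' u, v⟫ : A) = ⟪u, T' v⟫ := by
  conv_rhs => rw [← hT' u]
  rw [hT, hT']

end HCSM

section Frame

variable {A : Type*} [CStarAlgebra A] [PartialOrder A] [StarOrderedRing A]
variable {U : Type*} [NormedAddCommGroup U] [NormedSpace ℂ U] [HCSM A U]
variable {Ω : Type*} [MeasurableSpace Ω] {μ : Measure Ω}

lemma star_integral {E : Type*} [NormedAddCommGroup E] [NormedSpace ℝ E] [StarAddMonoid E]
    [ContinuousStar E] [StarModule ℝ E] (h : Ω → E) :
    star (∫ ω, h ω ∂μ) = ∫ ω, star (h ω) ∂μ :=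
  ((starL' ℝ (A := E)).integral_comp_comm h).symm

lemma inner_frameOperator_symm {F : Ω → U} {S : U → U}
    (hS : ∀ f g : U, (⟪S f, g⟫ : A) = ∫ ω, (⟪f, F ω⟫ : A) * ⟪F ω, g⟫ ∂μ) (u v : U) :
    (⟪S u, v⟫ : A) = ⟪u, S v⟫ := by
  rw [hS, ← HCSM.star_inner (S v), hS, star_integral]
  simp only [star_mul, HCSM.star_inner]

lemma IsContFrame.memL2_inner {F : Ω → U} {a b : ℝ} (hF : IsContFrame μ F a b) (g : U) :
    MemL2 μ (fun ω => (⟪g, F ω⟫ : A)) := by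
  refine ⟨hF.1 g, ?_⟩
  simpa only [HCSM.star_inner] using (hF.2.2.2 g).1

end Frame

section L2

variable {A : Type*} [CStarAlgebra A] {Ω : Type*}

lemma indicator_mul_star_apply (s : Set Ω) (φ : Ω → A) (ω : Ω) :
    s.indicator φ ω * star (s.indicator φ ω) = s.indicator (fun ω => φ ω * star (φ ω)) ω := by
  by_cases hω : ω ∈ s
  · simp only [Set.indicator_of_mem hω]
  · simp only [Set.indicator_of_notMem hω, star_zero, mul_zero]

variable [MeasurableSpace Ω] {μ : Measure Ω}

lemma MemL2.indicator {φ : Ω → A} (hφ : MemL2 μ φ) {s : Set Ω} (hs : MeasurableSet s) :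
    MemL2 μ (s.indicator φ) :=
  ⟨hφ.1.indicator hs, by simpa only [indicator_mul_star_apply] using hφ.2.indicator hs⟩

lemma MemL2.sub {φ ψ : Ω → A} (hφ : MemL2 μ φ) (hψ : MemL2 μ ψ) : MemL2 μ (φ - ψ) := by
  have hmeas : AEStronglyMeasurable (φ - ψ) μ := hφ.1.sub hψ.1
  refine ⟨hmeas, Integrable.mono' ((hφ.2.norm.const_mul 2).add (hψ.2.norm.const_mul 2))
    (hmeas.mul (continuous_star.comp_aestronglyMeasurable hmeas)) ?_⟩
  filter_upwards with ω
  simp only [Pi.sub_apply, Pi.add_apply, CStarRing.norm_self_mul_star]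
  -- `‖x - y‖² ≤ 2‖x‖² + 2‖y‖²`
  nlinarith [norm_sub_le (φ ω) (ψ ω), norm_nonneg (φ ω - ψ ω),
    sq_nonneg (‖φ ω‖ - ‖ψ ω‖)]

end L2

-- `hv` takes care of the case where `∫ u` or `∫ v` is the junk value `0` of a non-integrable function.
lemma MeasureTheory.integral_sub_eq_zero {Ω E : Type*} [MeasurableSpace Ω] {μ : Measure Ω}
    [NormedAddCommGroup E] [NormedSpace ℝ E] {u v : Ω → E}
    (h : ∫ ω, u ω ∂μ = ∫ ω, v ω ∂μ) (hv : ∫ ω, v ω ∂μ = 0 → v = 0) :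
    ∫ ω, (u - v) ω ∂μ = 0 := by
  by_cases hu : Integrable u μ
  · by_cases hv' : Integrable v μ
    · rw [integral_sub' hu hv', h, sub_self]
    · rw [hv (integral_undef hv')] at hv'
      exact absurd (integrable_zero Ω E μ) hv'
  · rw [hv (h ▸ integral_undef hu), sub_zero, integral_undef hu]

theorem canonical_dual_coefficients_general
    {A : Type*} [CStarAlgebra A] [PartialOrder A] [StarOrderedRing A]
    {U : Type*} [NormedAddCommGroup U] [NormedSpace ℂ U] [CompleteSpace U] [HCSM A U]
    {Ω : Type*} [MeasurableSpace Ω] (μ : Measure Ω)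
    (F : Ω → U) (a b : ℝ) (hF : IsContFrame μ F a b) (hInd : L2Independent μ F)
    (S Sinv : U → U)
    (hS : ∀ f g : U, (⟪S f, g⟫ : A) = ∫ ω, (⟪f, F ω⟫ : A) * ⟪F ω, g⟫ ∂μ)
    (hSinv : ∀ f : U, Sinv (S f) = f ∧ S (Sinv f) = f)
    (hdual : ∀ g : U, (∫ ω, (⟪g, Sinv (F ω)⟫ : A) • F ω ∂μ) = g)
    (φ : Ω → A) (hφ : MemL2 μ φ)
    (Ω₁ : Set Ω) (hΩ₁ : MeasurableSet Ω₁)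
    (f : U) (hf : f = ∫ ω in Ω₁, φ ω • F ω ∂μ) :
    (⟪Sinv f, f⟫ : A) = ∫ ω in Ω₁, φ ω * star (φ ω) ∂μ := by
  have hSsymm := inner_frameOperator_symm hS
  have hSinvsymm := HCSM.inner_symm_of_rightInverse hSsymm fun x => (hSinv x).2
  set g := Sinv f
  have hrecon : ∫ ω, (⟪g, F ω⟫ : A) • F ω ∂μ = f := by
    simpa only [← hSinvsymm] using hdual f
  have hcoeff : ∀ ω, Ω₁.indicator φ ω - ⟪g, F ω⟫ = 0 := by
    refine hInd _ ((hφ.indicator hΩ₁).sub (hF.memL2_inner g)) ?_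
    simp only [HCSM.sub_smul', HCSM.indicator_smul_apply']
    refine integral_sub_eq_zero (by rw [integral_indicator hΩ₁, ← hf, hrecon]) fun hzero => ?_
    have hg : g = 0 := by
      rw [show g = Sinv f from rfl, ← hrecon, hzero, HCSM.map_zero_of_inner_symm hSinvsymm]
    funext ω
    rw [hg, HCSM.inner_zero_left, HCSM.zero_smul', Pi.zero_apply]
  calc (⟪g, f⟫ : A) = ⟪S g, g⟫ := by rw [hSsymm, (hSinv f).2]
    _ = ∫ ω, Ω₁.indicator (fun ω => φ ω * star (φ ω)) ω ∂μ := by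
      rw [hS]
      congr 1 with ω
      rw [← HCSM.star_inner g, ← sub_eq_zero.mp (hcoeff ω), indicator_mul_star_apply]
    _ = ∫ ω in Ω₁, φ ω * star (φ ω) ∂μ := integral_indicator hΩ₁

theorem canonical_dual_coefficients
    {A : Type*} [CStarAlgebra A] [PartialOrder A] [StarOrderedRing A]
    {U : Type*} [NormedAddCommGroup U] [NormedSpace ℂ U] [CompleteSpace U] [HCSM A U]
    {Ω : Type*} [MeasurableSpace Ω] (μ : Measure Ω)
    (F : Ω → U) (a b : ℝ) (hF : IsContFrame μ F a b) (hInd : L2Independent μ F)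
    (S Sinv : U → U)
    (hS : ∀ f g : U, (⟪S f, g⟫ : A) = ∫ ω, (⟪f, F ω⟫ : A) * ⟪F ω, g⟫ ∂μ)
    (hSinv : ∀ f : U, Sinv (S f) = f ∧ S (Sinv f) = f)
    (hdual : ∀ g : U, (∫ ω, (⟪g, Sinv (F ω)⟫ : A) • F ω ∂μ) = g)
    (φ : Ω → A) (hφ : MemL2 μ φ)
    (Ω₁ : Set Ω) (hΩ₁ : MeasurableSet Ω₁) (hfin : μ Ω₁ < ⊤)
    (f : U) (hf : f = ∫ ω in Ω₁, φ ω • F ω ∂μ) :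
    (⟪Sinv f, f⟫ : A) = ∫ ω in Ω₁, φ ω * star (φ ω) ∂μ :=
  canonical_dual_coefficients_general μ F a b hF hInd S Sinv hS hSinv hdual φ hφ Ω₁ hΩ₁ f hf
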